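/- Let (ξ_i)_{i≥1} be i.i.d. pairs ξ_i=(ξ^c_i, ξ^m_i) with E(ξ^c+ξ^m) ≤ 1, π^{*n}_{k,ℓ} the n-fold convolution of their joint law, T^c_k = inf{n : Σ_{i≤n} ξ^c_i − n = −k}. Then P(T^c_k = n, Σ_{i=1}^n ξ^m_i = k−1) = (k/n) π^{*n}_{n−k, k−1} for all 1 ≤ k ≤ n. -/

import Mathlib

/-!
This is the cycle lemma. Write `S` for the walk `m ↦ ∑_{i<m} ξ^c_i - m`. On the event
`∑ ξ^c = n - k, ∑ ξ^m = k - 1`, exactly `k` of the `n` cyclic rotations of `(ξ_1, …, ξ_n)`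
have a walk that first reaches `-k` at time `n`: they are the rotations started at the first
visits of `S` to the `k` lowest levels `M, …, M + k - 1` it reaches in a period. Rotations
preserve the law of an i.i.d. vector, so
`n P(T^c_k = n, ∑ ξ^m = k - 1) = k P(∑ ξ^c = n - k, ∑ ξ^m = k - 1)`.
-/

open MeasureTheory ProbabilityTheory Finset

theorem Function.Periodic.sum_range_add_left {M : Type*} [AddCancelCommMonoid M] {f : ℕ → M}
    {n : ℕ} (hf : Function.Periodic f n) (r : ℕ) :
    ∑ i ∈ range n, f (r + i) = ∑ i ∈ range n, f i := by
  have h := sum_range_add f r n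
  have hf' : ∀ i, f (n + i) = f i := fun i => by rw [add_comm]; exact hf i
  rw [add_comm r n, sum_range_add, add_comm (∑ i ∈ range n, f i)] at h
  simp only [hf'] at h
  exact (add_left_cancel h).symm

theorem Finset.sum_range_add_mod {M : Type*} [AddCancelCommMonoid M] (f : ℕ → M)
    {n : ℕ} (r : ℕ) : ∑ i ∈ range n, f ((r + i) % n) = ∑ i ∈ range n, f i := by
  have hper : Function.Periodic (fun j => f (j % n)) n := fun j => by simp
  rw [hper.sum_range_add_left r]
  exact sum_congr rfl fun i hi => by rw [Nat.mod_eq_of_lt (mem_range.1 hi)]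

namespace CycleLemma

-- The walk `m ↦ ∑_{i<m} ξ^c_i - m` whose first passage time at `-k` is `T^c_k`.
def walk (c : ℕ → ℕ) (m : ℕ) : ℤ := ∑ i ∈ range m, (c i : ℤ) - m

variable {c : ℕ → ℕ} {k n : ℕ}

@[simp] theorem walk_zero : walk c 0 = 0 := by simp [walk]

theorem walk_succ (m : ℕ) : walk c (m + 1) = walk c m + c m - 1 := by
  simp only [walk, sum_range_succ]; push_cast; ring

theorem walk_sub_one_le_walk_succ (m : ℕ) : walk c m - 1 ≤ walk c (m + 1) := by
  rw [walk_succ]; omega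

theorem walk_add (r m : ℕ) : walk c (r + m) = walk c r + walk (fun i => c (r + i)) m := by
  simp only [walk, sum_range_add]; push_cast; ring

theorem walk_congr {d : ℕ → ℕ} {m : ℕ} (h : ∀ i < m, c i = d i) : walk c m = walk d m := by
  simp only [walk]
  rw [sum_congr rfl fun i hi => by rw [h i (mem_range.1 hi)]]

theorem walk_eq_neg_iff (hkn : k ≤ n) : walk c n = -k ↔ ∑ i ∈ range n, c i = n - k := by
  simp only [walk, ← Nat.cast_sum]; omega

theorem walk_shift_of_periodic (hc : Function.Periodic c n) (r : ℕ) :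
    walk (fun i => c (r + i)) n = walk c n := by
  have hcℤ : Function.Periodic (fun i => (c i : ℤ)) n := fun i => congrArg _ (hc i)
  simp only [walk]
  rw [hcℤ.sum_range_add_left]

theorem walk_add_period (hc : Function.Periodic c n) (m : ℕ) :
    walk c (m + n) = walk c m + walk c n := by
  rw [walk_add, walk_shift_of_periodic hc]

-- Steps are `≥ -1`, so the walk cannot jump over `-k`.
theorem forall_walk_ne_iff : (∀ m < n, walk c m ≠ -k) ↔ ∀ m < n, -(k : ℤ) < walk c m := by
  refine ⟨fun h m => ?_, fun h m hm => (h m hm).ne'⟩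
  induction m with
  | zero => intro hn; have := h 0 hn; rw [walk_zero] at this ⊢; omega
  | succ m ih =>
    intro hm
    have := walk_sub_one_le_walk_succ (c := c) m
    have := ih (by omega)
    have := h (m + 1) hm
    omega

theorem exists_first_walk_eq {v : ℤ} (hv : v ≤ 0) {j : ℕ} (hj : walk c j ≤ v) :
    ∃ r ≤ j, walk c r = v ∧ ∀ i < r, v < walk c i := by
  have hex : ∃ r, walk c r ≤ v := ⟨j, hj⟩
  refine ⟨Nat.find hex, Nat.find_min' hex hj, ?_, fun i hi => not_le.1 (Nat.find_min hex hi)⟩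
  refine le_antisymm (Nat.find_spec hex) ?_
  by_cases h0 : Nat.find hex = 0
  · rw [h0, walk_zero]; exact hv
  · obtain ⟨t, ht⟩ := Nat.exists_eq_add_one_of_ne_zero h0
    have hlt : v < walk c t := not_le.1 (Nat.find_min hex (by omega))
    have := walk_sub_one_le_walk_succ (c := c) t
    rw [ht]; omega

theorem card_ladder {N j₀ : ℕ} {M : ℤ} (hM : ∀ j < N, M ≤ walk c j) (hj₀ : j₀ < N)
    (hMj₀ : walk c j₀ = M) (hk : M + k ≤ 1) :
    #{r ∈ range N | (∀ j < r, walk c r < walk c j) ∧ walk c r < M + k} = k := by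
  set L := {r ∈ range N | (∀ j < r, walk c r < walk c j) ∧ walk c r < M + k}
  have hinj : Set.InjOn (walk c) L := by
    intro r hr s hs hrs
    rw [mem_coe, mem_filter] at hr hs
    by_contra hne
    rcases Nat.lt_or_gt_of_ne hne with h | h
    · exact (hs.2.1 r h).ne hrs.symm
    · exact (hr.2.1 s h).ne hrs
  have himage : image (walk c) L = Ico M (M + k) := by
    ext v
    simp only [L, mem_image, mem_filter, mem_range, mem_Ico]
    constructor
    · rintro ⟨r, ⟨hr, -, hlt⟩, rfl⟩
      exact ⟨hM r hr, hlt⟩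
    · rintro ⟨hMv, hvk⟩
      obtain ⟨r, hrj, hrv, hbefore⟩ := exists_first_walk_eq (by omega) (hMj₀.trans_le hMv)
      exact ⟨r, ⟨by omega, fun j hj => hrv ▸ hbefore j hj, by omega⟩, hrv⟩
  rw [← card_image_of_injOn hinj, himage, Int.card_Ico]
  omega

theorem shift_avoids_iff (hc : Function.Periodic c n) (hS : walk c n = -k) {M : ℤ} {j₀ : ℕ}
    (hM : ∀ j < n, M ≤ walk c j) (hj₀ : j₀ < n) (hMj₀ : walk c j₀ = M) {r : ℕ} (hr : r < n) :
    (∀ m < n, -(k : ℤ) < walk (fun i => c (r + i)) m) ↔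
      (∀ j < r, walk c r < walk c j) ∧ walk c r < M + k := by
  have hshift : ∀ m, walk (fun i => c (r + i)) m = walk c (r + m) - walk c r := fun m => by
    rw [walk_add]; ring
  have hper : ∀ j, walk c (j + n) = walk c j - k := fun j => by
    rw [walk_add_period hc, hS]; ring
  simp only [hshift]
  constructor
  · intro h
    have hladder : ∀ j < r, walk c r < walk c j := fun j hj => by
      have := h (j + n - r) (by omega)
      rw [show r + (j + n - r) = j + n by omega, hper] at this
      omega
    refine ⟨hladder, ?_⟩
    rcases Nat.lt_or_ge j₀ r with hjr | hjr
    · have := hladder j₀ hjr; have := hM r hr; omega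
    · have := h (j₀ - r) (by omega)
      rw [show r + (j₀ - r) = j₀ by omega, hMj₀] at this
      omega
  · rintro ⟨hladder, hlt⟩ m hm
    rcases Nat.lt_or_ge (r + m) n with hrm | hrm
    · have := hM (r + m) hrm; omega
    · have := hladder (r + m - n) (by omega)
      rw [show r + m = r + m - n + n by omega, hper]
      omega

def IsFirstPassage (c : ℕ → ℕ) (k n : ℕ) : Prop :=
  walk c n = -k ∧ ∀ m < n, walk c m ≠ -k

theorem sInf_eq_iff_isFirstPassage (hn : n ≠ 0) :
    sInf {m | walk c m = -k} = n ↔ IsFirstPassage c k n := by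
  constructor
  · intro h
    have hne : {m | walk c m = -k}.Nonempty := by
      by_contra hempty
      rw [Set.not_nonempty_iff_eq_empty.1 hempty, Nat.sInf_empty] at h
      exact hn h.symm
    exact ⟨h ▸ Nat.sInf_mem hne, fun m hm => Nat.notMem_of_lt_sInf (h ▸ hm)⟩
  · rintro ⟨hhit, hfirst⟩
    exact le_antisymm (Nat.sInf_le hhit)
      (not_lt.1 fun hlt => hfirst _ hlt (Nat.sInf_mem (s := {m | walk c m = -k}) ⟨n, hhit⟩))

theorem isFirstPassage_congr {d : ℕ → ℕ} (h : ∀ i < n, c i = d i) :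
    IsFirstPassage c k n ↔ IsFirstPassage d k n := by
  have hwalk : ∀ m ≤ n, walk c m = walk d m := fun m hm =>
    walk_congr fun i hi => h i (by omega)
  simp only [IsFirstPassage, hwalk n le_rfl]
  exact and_congr_right' (forall₂_congr fun m hm => by rw [hwalk m hm.le])

open scoped Classical in
-- The cycle lemma of Dvoretzky and Motzkin.
theorem card_filter_isFirstPassage_shift (hc : Function.Periodic c n) (hn : 0 < n)
    (hS : walk c n = -k) : #{r ∈ range n | IsFirstPassage (fun i => c (r + i)) k n} = k := by
  obtain ⟨j₀, hj₀, hmin⟩ := exists_min_image (range n) (walk c) (nonempty_range_iff.2 hn.ne')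
  have hM : ∀ j < n, walk c j₀ ≤ walk c j := fun j hj => hmin j (mem_range.2 hj)
  have hk : walk c j₀ + k ≤ 1 := by
    have := hM (n - 1) (by omega)
    have := walk_sub_one_le_walk_succ (c := c) (n - 1)
    rw [Nat.sub_add_cancel hn, hS] at this
    omega
  refine (congrArg card (filter_congr fun r hr => ?_)).trans
    (card_ladder hM (mem_range.1 hj₀) rfl hk)
  rw [IsFirstPassage, walk_shift_of_periodic hc, forall_walk_ne_iff,
    shift_avoids_iff hc hS hM (mem_range.1 hj₀) rfl (mem_range.1 hr)]
  exact and_iff_right hS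

-- The event `{T^c_k = n, ξ^m_1 + ⋯ + ξ^m_n = k - 1}` along the path `z = (ξ_i)`.
def ClustersCompleteAt (k n : ℕ) (z : ℕ → ℕ × ℕ) : Prop :=
  IsFirstPassage (fun i => (z i).1) k n ∧ ∑ i ∈ range n, (z i).2 = k - 1

theorem clustersCompleteAt_congr {z w : ℕ → ℕ × ℕ} (h : ∀ i < n, z i = w i) :
    ClustersCompleteAt k n z ↔ ClustersCompleteAt k n w := by
  rw [ClustersCompleteAt, ClustersCompleteAt, isFirstPassage_congr fun i hi => by rw [h i hi],
    sum_congr rfl fun i hi => by rw [h i (mem_range.1 hi)]]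

theorem ClustersCompleteAt.sum_eq_of_rotate {y : ℕ → ℕ × ℕ} {r : ℕ} (hkn : k ≤ n)
    (h : ClustersCompleteAt k n fun i => y ((r + i) % n)) :
    ∑ i ∈ range n, (y i).1 = n - k ∧ ∑ i ∈ range n, (y i).2 = k - 1 := by
  obtain ⟨⟨hhit, -⟩, hmut⟩ := h
  rw [walk_eq_neg_iff hkn, sum_range_add_mod (fun j => (y j).1)] at hhit
  rw [sum_range_add_mod (fun j => (y j).2)] at hmut
  exact ⟨hhit, hmut⟩

open scoped Classical in
theorem card_filter_clustersCompleteAt_rotate {y : ℕ → ℕ × ℕ} (hn : 0 < n) (hkn : k ≤ n)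
    (h₁ : ∑ i ∈ range n, (y i).1 = n - k) (h₂ : ∑ i ∈ range n, (y i).2 = k - 1) :
    #{r ∈ range n | ClustersCompleteAt k n fun i => y ((r + i) % n)} = k := by
  have hc : Function.Periodic (fun j => (y (j % n)).1) n := fun j => by simp
  have hS : walk (fun j => (y (j % n)).1) n = -k := by
    rw [walk_eq_neg_iff hkn, ← h₁, ← sum_range_add_mod (fun j => (y j).1) 0]
    simp only [zero_add]
  refine (congrArg card (filter_congr fun r _ => ?_)).trans
    (card_filter_isFirstPassage_shift hc hn hS)
  rw [ClustersCompleteAt, sum_range_add_mod (fun j => (y j).2), h₂]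
  exact and_iff_left rfl

end CycleLemma

section Exchangeability

variable {Ω β : Type*}

theorem identDistrib_comp_of_injective [MeasurableSpace Ω] [MeasurableSpace β] {P : Measure Ω}
    {ι : Type*} {ξ : ι → Ω → β}
    (hindep : iIndepFun ξ P) {i₀ : ι} (hident : ∀ i, IdentDistrib (ξ i) (ξ i₀) P P)
    {κ : Type*} [Countable κ] {g h : κ → ι} (hg : g.Injective) (hh : h.Injective) :
    IdentDistrib (fun ω j => ξ (g j) ω) (fun ω j => ξ (h j) ω) P P :=
  .pi (fun j => (hident (g j)).trans (hident (h j)).symm) (hindep.precomp hg) (hindep.precomp hh)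

theorem Fin.injective_add_val_mod {n : ℕ} (r : ℕ) :
    Function.Injective fun i : Fin n => (r + i) % n :=
  fun i j h => Fin.ext <| by
    simpa [Nat.ModEq, Nat.mod_eq_of_lt i.isLt, Nat.mod_eq_of_lt j.isLt] using
      Nat.ModEq.add_left_cancel' r h

theorem setOf_rotate_eq_preimage {ξ : ℕ → Ω → β} {n : ℕ} (hn : 0 < n) (E : (ℕ → β) → Prop)
    (r : ℕ) :
    {ω | E fun i => ξ ((r + i) % n) ω} = (fun ω (i : Fin n) => ξ ((r + i) % n) ω) ⁻¹'
      {v | E fun j => v ⟨j % n, Nat.mod_lt j hn⟩} := by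
  ext ω
  simp only [Set.mem_ofPred_eq, Set.mem_preimage, Nat.add_mod_mod]

variable [MeasurableSpace Ω] [MeasurableSpace β] [Countable β] [MeasurableSingletonClass β]
  {P : Measure Ω} {ξ : ℕ → Ω → β}

theorem nullMeasurableSet_setOf_rotate (hξ : ∀ i, AEMeasurable (ξ i) P) {n : ℕ} (hn : 0 < n)
    (E : (ℕ → β) → Prop) (r : ℕ) : NullMeasurableSet {ω | E fun i => ξ ((r + i) % n) ω} P := by
  rw [setOf_rotate_eq_preimage hn]
  exact (aemeasurable_pi_lambda _ fun i => hξ _).nullMeasurableSet_preimage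
    (Set.to_countable _).measurableSet

theorem measure_setOf_rotate_eq (hindep : iIndepFun ξ P)
    {i₀ : ℕ} (hident : ∀ i, IdentDistrib (ξ i) (ξ i₀) P P) {n : ℕ} (hn : 0 < n)
    (E : (ℕ → β) → Prop) (r s : ℕ) :
    P {ω | E fun i => ξ ((r + i) % n) ω} = P {ω | E fun i => ξ ((s + i) % n) ω} := by
  rw [setOf_rotate_eq_preimage hn, setOf_rotate_eq_preimage hn]
  exact (identDistrib_comp_of_injective hindep hident (Fin.injective_add_val_mod r)
    (Fin.injective_add_val_mod s)).measure_mem_eq (Set.to_countable _).measurableSet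

end Exchangeability

open scoped Classical in
theorem sum_measure_eq_mul_measure_of_card {Ω ι : Type*} [MeasurableSpace Ω] {μ : Measure Ω}
    {s : Finset ι} {A : ι → Set Ω} {B : Set Ω} {k : ℕ}
    (hA : ∀ i ∈ s, NullMeasurableSet (A i) μ) (hB : NullMeasurableSet B μ)
    (hAB : ∀ i ∈ s, A i ⊆ B) (hcard : ∀ ω ∈ B, #{i ∈ s | ω ∈ A i} = k) :
    ∑ i ∈ s, μ (A i) = k * μ B := by
  have hpoint : ∀ ω, ∑ i ∈ s, (A i).indicator 1 ω = (k : ENNReal) * B.indicator 1 ω := by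
    intro ω
    simp only [Set.indicator_apply, Pi.one_apply, sum_boole]
    split_ifs with hω
    · rw [hcard ω hω, mul_one]
    · rw [mul_zero, filter_false_of_mem fun i hi hωi => hω (hAB i hi hωi), card_empty,
        Nat.cast_zero]
  calc ∑ i ∈ s, μ (A i)
      = ∑ i ∈ s, ∫⁻ ω, (A i).indicator 1 ω ∂μ :=
        sum_congr rfl fun i hi => (lintegral_indicator_one₀ (hA i hi)).symm
    _ = ∫⁻ ω, ∑ i ∈ s, (A i).indicator 1 ω ∂μ :=
        (lintegral_finsetSum' _ fun i hi => aemeasurable_one.indicator₀ (hA i hi)).symm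
    _ = k * μ B := by
        simp only [hpoint]
        rw [lintegral_const_mul' _ _ (ENNReal.natCast_ne_top k), lintegral_indicator_one₀ hB]

theorem prob_Tck_eq_n_and_mutants_general
    {Ω : Type*} [MeasureSpace Ω] (P : Measure Ω := volume)
    (ξ : ℕ → Ω → ℕ × ℕ)
    (hindep : iIndepFun ξ P)
    (hident : ∀ i, IdentDistrib (ξ i) (ξ 0) P P)
    (Tc : ℕ → Ω → ℕ)
    (hTc : ∀ j ω, Tc j ω = sInf {m : ℕ |
      (∑ i ∈ Finset.range m, ((ξ i ω).1 : ℤ)) - m = -(j : ℤ)})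
    (n k : ℕ) (hk1 : 1 ≤ k) (hkn : k ≤ n) :
    P {ω | Tc k ω = n ∧ (∑ i ∈ Finset.range n, (ξ i ω).2) = k - 1}
      = ((k : ENNReal) / n) *
        P {ω | (∑ i ∈ Finset.range n, (ξ i ω).1) = n - k
             ∧ (∑ i ∈ Finset.range n, (ξ i ω).2) = k - 1} := by
  have hn : 0 < n := by omega
  have hξ : ∀ i, AEMeasurable (ξ i) P := fun i => (hident i).aemeasurable_fst
  set E := CycleLemma.ClustersCompleteAt k n
  set A : ℕ → Set Ω := fun r => {ω | E fun i => ξ ((r + i) % n) ω}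
  set B := {ω | (∑ i ∈ Finset.range n, (ξ i ω).1) = n - k
             ∧ (∑ i ∈ Finset.range n, (ξ i ω).2) = k - 1}
  have hA₀ : {ω | Tc k ω = n ∧ (∑ i ∈ Finset.range n, (ξ i ω).2) = k - 1} = A 0 := by
    ext ω
    simp only [Set.mem_ofPred_eq, hTc]
    change sInf {m | CycleLemma.walk (fun i => (ξ i ω).1) m = -k} = n ∧ _ ↔ _
    rw [CycleLemma.sInf_eq_iff_isFirstPassage hn.ne']
    exact (CycleLemma.clustersCompleteAt_congr fun i hi => by
      rw [zero_add, Nat.mod_eq_of_lt hi]).symm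
  have hB : NullMeasurableSet B P := by
    have hsum : ∀ f : ℕ × ℕ → ℕ, AEMeasurable (fun ω => ∑ i ∈ range n, f (ξ i ω)) P := by
      fun_prop
    exact ((hsum Prod.fst).nullMeasurableSet_preimage (measurableSet_singleton _)).inter
      ((hsum Prod.snd).nullMeasurableSet_preimage (measurableSet_singleton _))
  have hcount : ∑ r ∈ range n, P (A r) = k * P B :=
    sum_measure_eq_mul_measure_of_card (fun r _ => nullMeasurableSet_setOf_rotate hξ hn E r) hB
      (fun r _ ω hω => hω.sum_eq_of_rotate hkn) fun ω hω =>
        CycleLemma.card_filter_clustersCompleteAt_rotate (y := (ξ · ω)) hn hkn hω.1 hω.2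
  rw [sum_congr rfl fun r _ => measure_setOf_rotate_eq hindep hident hn E r 0, sum_const,
    card_range, nsmul_eq_mul] at hcount
  rw [hA₀, ENNReal.div_eq_inv_mul, mul_assoc, ← hcount, ← mul_assoc,
    ENNReal.inv_mul_cancel (by exact_mod_cast hn.ne') (ENNReal.natCast_ne_top n), one_mul]

/-- `P(T^c_k = n, ξ^m_1 + ... + ξ^m_n = k - 1) = (k/n) π^{*n}_{n-k, k-1}`: the probability
that the first `k` allelic clusters have total size `n` and generate exactly `k - 1`
mutants. -/
theorem prob_Tck_eq_n_and_mutants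
    {Ω : Type*} [MeasureSpace Ω] (P : Measure Ω := volume) [IsProbabilityMeasure P]
    (ξ : ℕ → Ω → ℕ × ℕ) (hmeas : ∀ i, Measurable (ξ i))
    (hindep : iIndepFun ξ P)
    (hident : ∀ i, IdentDistrib (ξ i) (ξ 0) P P)
    (hint : Integrable (fun ω => (((ξ 0 ω).1 : ℝ) + ((ξ 0 ω).2 : ℝ))) P)
    (hmean : (∫ ω, (((ξ 0 ω).1 : ℝ) + ((ξ 0 ω).2 : ℝ)) ∂P) ≤ 1)
    (Tc : ℕ → Ω → ℕ)
    (hTc : ∀ j ω, Tc j ω = sInf {m : ℕ |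
      (∑ i ∈ Finset.range m, ((ξ i ω).1 : ℤ)) - m = -(j : ℤ)})
    (n k : ℕ) (hk1 : 1 ≤ k) (hkn : k ≤ n) :
    P {ω | Tc k ω = n ∧ (∑ i ∈ Finset.range n, (ξ i ω).2) = k - 1}
      = ((k : ENNReal) / n) *
        P {ω | (∑ i ∈ Finset.range n, (ξ i ω).1) = n - k
             ∧ (∑ i ∈ Finset.range n, (ξ i ω).2) = k - 1} :=
  prob_Tck_eq_n_and_mutants_general P ξ hindep hident Tc hTc n k hk1 hkn
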